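/- Let u : U → ℝ be an η-strongly convex function on an open convex set U ⊆ ℝⁿ, and let K ⊂ U be compact. Define ũ : ℝⁿ → ℝ by ũ(x) = sup{ u(z) + ⟨ξ_z, x − z⟩ + (η/2)|x − z|² : z ∈ K, ξ_z ∈ ∂u(z) }. Then ũ is finite everywhere, η-strongly convex on ℝⁿ, and satisfies: (a) ũ(x) = u(x) for all x ∈ K; (b) ũ(x) ≤ u(x) for all x ∈ U. -/

import Mathlib

open MeasureTheory Metric Set Filter
open scoped ENNReal RealInnerProductSpace

/-- The subdifferential of `u : U → ℝ` at `x`. -/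
def subdiff {n : ℕ} (U : Set (EuclideanSpace ℝ (Fin n))) (u : EuclideanSpace ℝ (Fin n) → ℝ)
    (x : EuclideanSpace ℝ (Fin n)) : Set (EuclideanSpace ℝ (Fin n)) :=
  {ξ | ∀ y ∈ U, u x + ⟪ξ, y - x⟫ ≤ u y}

open Topology

/-!
For `z ∈ K` and `ξ ∈ ∂u(z)` the tangent paraboloid `q(x) = u z + ⟪ξ, x - z⟫ + η/2 ‖x - z‖²` is
`η`-strongly convex, touches `u` at `z`, and lies below `u` on `U`: comparing the subgradient
inequality with the strong convexity inequality at `z + t (y - z)` and letting `t → 0` gives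
`q y ≤ u y`. Subdifferentials of the continuous convex function `u` are nonempty (Hahn–Banach
separation from the open strict epigraph) and bounded uniformly over `K`
(`ε ‖ξ‖ ≤ sup_{B(z, ε)} u - u z`), so the supremum of these paraboloids is finite;
being a supremum of `η`-strongly convex functions, it is `η`-strongly convex.
-/

lemma ContinuousOn.isOpen_strict_epigraph {X : Type*} [TopologicalSpace X] {U : Set X}
    {f : X → ℝ} (hf : ContinuousOn f U) (hU : IsOpen U) :
    IsOpen {p : X × ℝ | p.1 ∈ U ∧ f p.1 < p.2} :=
  (hf.comp continuousOn_fst fun _ hp => hp).prodMk continuousOn_snd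
    |>.isOpen_inter_preimage (hU.preimage continuous_fst) isOpen_lt_prod

section Normed
variable {E : Type*} [NormedAddCommGroup E] [NormedSpace ℝ E] {U : Set E} {f : E → ℝ}

lemma ConvexOn.exists_forall_add_clm_le (hf : ConvexOn ℝ U f) (hfc : ContinuousOn f U)
    (hU : IsOpen U) {z : E} (hz : z ∈ U) :
    ∃ ℓ : StrongDual ℝ E, ∀ y ∈ U, f z + ℓ (y - z) ≤ f y := by
  obtain ⟨L, hL⟩ := geometric_hahn_banach_point_open hf.convex_strict_epigraph
    (hfc.isOpen_strict_epigraph hU) (x := (z, f z)) (by simp)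
  set c := L (0, 1)
  have hL_apply (y : E) (t : ℝ) : L (y, t) = L (y, 0) + t * c := by
    have : ((y, t) : E × ℝ) = (y, 0) + t • (0, 1) := by simp
    rw [this, map_add, map_smul, smul_eq_mul]
  have hc : 0 < c := by
    have := hL (z, f z + 1) ⟨hz, lt_add_one _⟩
    rw [hL_apply z (f z), hL_apply z (f z + 1)] at this
    linarith
  refine ⟨-c⁻¹ • L.comp (.inl ℝ E ℝ), fun y hy =>
    le_of_forall_gt_imp_ge_of_dense fun t ht => ?_⟩
  have := hL (y, t) ⟨hy, ht⟩
  rw [hL_apply z, hL_apply y] at this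
  have hL_sub : L (y - z, 0) = L (y, 0) - L (z, 0) := by
    rw [← map_sub, Prod.mk_sub_mk, sub_zero]
  simp only [smul_apply, ContinuousLinearMap.comp_apply, ContinuousLinearMap.inl_apply,
    smul_eq_mul, hL_sub]
  rw [neg_mul, ← sub_eq_add_neg, sub_le_iff_le_add, ← sub_le_iff_le_add', le_inv_mul_iff₀ hc]
  linarith

lemma uniformConvexOn_of_isLUB {ι : Type*} {P : Set ι} {φ : ℝ → ℝ} {g : ι → E → ℝ}
    (hU : Convex ℝ U) (hg : ∀ i ∈ P, UniformConvexOn U φ (g i))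
    (hf : ∀ x ∈ U, IsLUB ((fun i => g i x) '' P) (f x)) : UniformConvexOn U φ f := by
  refine ⟨hU, fun x hx y hy a b ha hb hab => (hf _ (hU hx hy ha hb hab)).2 ?_⟩
  rintro _ ⟨i, hi, rfl⟩
  calc g i (a • x + b • y) ≤ a • g i x + b • g i y - a * b * φ ‖x - y‖ :=
        (hg i hi).2 hx hy ha hb hab
    _ ≤ a • f x + b • f y - a * b * φ ‖x - y‖ := by
        gcongr
        · exact (hf x hx).1 ⟨i, hi, rfl⟩
        · exact (hf y hy).1 ⟨i, hi, rfl⟩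

end Normed

section InnerProduct
variable {E : Type*} [NormedAddCommGroup E] [InnerProductSpace ℝ E] {U : Set E} {f : E → ℝ}
  {m ε M : ℝ} {y z ξ : E}

lemma ConvexOn.exists_forall_add_inner_le [FiniteDimensional ℝ E] (hf : ConvexOn ℝ U f)
    (hU : IsOpen U) (hz : z ∈ U) : ∃ ξ : E, ∀ y ∈ U, f z + ⟪ξ, y - z⟫ ≤ f y := by
  obtain ⟨ℓ, hℓ⟩ := hf.exists_forall_add_clm_le (hf.continuousOn hU) hU hz
  exact ⟨(InnerProductSpace.toDual ℝ E).symm ℓ, by simpa using hℓ⟩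

noncomputable def tangentParaboloid (m : ℝ) (f : E → ℝ) (z ξ x : E) : ℝ :=
  f z + ⟪ξ, x - z⟫ + m / 2 * ‖x - z‖ ^ 2

@[simp]
lemma tangentParaboloid_self : tangentParaboloid m f z ξ z = f z := by
  simp [tangentParaboloid]

lemma strongConvexOn_tangentParaboloid : StrongConvexOn univ m (tangentParaboloid m f z ξ) := by
  have hAffine : (fun x => tangentParaboloid m f z ξ x - m / 2 * ‖x‖ ^ 2) =
      fun x => ⟪ξ - m • z, x⟫ + (f z - ⟪ξ, z⟫ + m / 2 * ‖z‖ ^ 2) := by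
    ext x
    rw [tangentParaboloid, inner_sub_right, norm_sub_sq_real, inner_sub_left,
      real_inner_smul_left, real_inner_comm x z]
    ring
  rw [strongConvexOn_iff_convex, hAffine]
  exact ((innerₛₗ ℝ (ξ - m • z)).convexOn convex_univ).add_const _

lemma StrongConvexOn.tangentParaboloid_le (hf : StrongConvexOn U m f) (hz : z ∈ U)
    (hξ : ∀ y ∈ U, f z + ⟪ξ, y - z⟫ ≤ f y) (hy : y ∈ U) : tangentParaboloid m f z ξ y ≤ f y := by
  set c := m / 2 * ‖y - z‖ ^ 2
  have hchord : ∀ t ∈ Ioc (0 : ℝ) 1, ⟪ξ, y - z⟫ + (1 - t) * c ≤ f y - f z := by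
    rintro t ⟨ht0, ht1⟩
    have hconv := hf.2 hy hz ht0.le (sub_nonneg.2 ht1) (add_sub_cancel t 1)
    have hsub := hξ _ (hf.1 hy hz ht0.le (sub_nonneg.2 ht1) (add_sub_cancel t 1))
    rw [show t • y + (1 - t) • z - z = t • (y - z) by module, real_inner_smul_right] at hsub
    simp only [smul_eq_mul] at hconv
    refine le_of_mul_le_mul_left ?_ ht0
    linear_combination hsub + hconv
  have hlim : Tendsto (fun t => ⟪ξ, y - z⟫ + (1 - t) * c) (𝓝[>] 0) (𝓝 (⟪ξ, y - z⟫ + c)) :=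
    ((by fun_prop : Continuous fun t : ℝ => ⟪ξ, y - z⟫ + (1 - t) * c).tendsto' 0 _
      (by simp)).mono_left nhdsWithin_le_nhds
  have := le_of_tendsto hlim (eventually_of_mem (Ioc_mem_nhdsGT zero_lt_one) hchord)
  change f z + ⟪ξ, y - z⟫ + c ≤ f y
  linarith

lemma mul_norm_le_of_forall_add_inner_le (hε : 0 ≤ ε) (hM : ∀ y ∈ closedBall z ε, f y ≤ M)
    (hξ : ∀ y ∈ closedBall z ε, f z + ⟪ξ, y - z⟫ ≤ f y) : ε * ‖ξ‖ ≤ M - f z := by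
  rcases eq_or_ne ξ 0 with rfl | hξ0
  · simpa using hM z (mem_closedBall_self hε)
  have hn : ‖ξ‖ ≠ 0 := norm_ne_zero_iff.2 hξ0
  set y := z + (ε / ‖ξ‖) • ξ
  have hy : y ∈ closedBall z ε := by
    rw [mem_closedBall, dist_eq_norm, add_sub_cancel_left, norm_smul, Real.norm_eq_abs,
      abs_div, abs_norm, abs_of_nonneg hε, div_mul_cancel₀ _ hn]
  have hinner : ⟪ξ, y - z⟫ = ε * ‖ξ‖ := by
    rw [add_sub_cancel_left, real_inner_smul_right, real_inner_self_eq_norm_sq]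
    field_simp
  linarith [hM y hy, hξ y hy]

lemma IsCompact.exists_bound_of_forall_add_inner_le [ProperSpace E] {K : Set E}
    (hK : IsCompact K) (hU : IsOpen U) (hKU : K ⊆ U) (hf : ContinuousOn f U) :
    ∃ R, ∀ z ∈ K, ∀ ξ : E, (∀ y ∈ U, f z + ⟪ξ, y - z⟫ ≤ f y) → ‖ξ‖ ≤ R := by
  obtain ⟨ε, hε, hεU⟩ := hK.exists_cthickening_subset_open hU hKU
  obtain ⟨M, hM⟩ := hK.cthickening.bddAbove_image (hf.mono hεU)
  obtain ⟨m, hm⟩ := hK.bddBelow_image (hf.mono hKU)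
  refine ⟨(M - m) / ε, fun z hz ξ hξ => ?_⟩
  have hball : closedBall z ε ⊆ cthickening ε K := closedBall_subset_cthickening hz ε
  have := mul_norm_le_of_forall_add_inner_le hε.le (fun y hy => hM ⟨y, hball hy, rfl⟩)
    (fun y hy => hξ y (hεU (hball hy)))
  rw [le_div_iff₀ hε]
  linarith [hm ⟨z, hz, rfl⟩]

lemma bddAbove_tangentParaboloid_image {P : Set (E × E)} (hP : Bornology.IsBounded P)
    (hf : BddAbove ((fun p => f p.1) '' P)) (x : E) :
    BddAbove ((fun p => tangentParaboloid m f p.1 p.2 x) '' P) := by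
  obtain ⟨M, hM⟩ := hf
  obtain ⟨r, hr⟩ := hP.subset_closedBall (x, 0)
  refine ⟨M + r * r + |m| / 2 * r ^ 2, ?_⟩
  rintro _ ⟨⟨z, ξ⟩, hp, rfl⟩
  obtain ⟨hxz, hξ⟩ : ‖x - z‖ ≤ r ∧ ‖ξ‖ ≤ r := by
    simpa [Prod.dist_eq, dist_eq_norm, norm_sub_rev z x] using hr hp
  have hfz : f z ≤ M := hM ⟨(z, ξ), hp, rfl⟩
  have hinner : ⟪ξ, x - z⟫ ≤ r * r :=
    (real_inner_le_norm ξ (x - z)).trans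
      (mul_le_mul hξ hxz (norm_nonneg _) ((norm_nonneg _).trans hξ))
  have hsq : m / 2 * ‖x - z‖ ^ 2 ≤ |m| / 2 * r ^ 2 :=
    calc m / 2 * ‖x - z‖ ^ 2 ≤ |m| / 2 * ‖x - z‖ ^ 2 := by gcongr; exact le_abs_self m
      _ ≤ |m| / 2 * r ^ 2 := by gcongr
  change f z + ⟪ξ, x - z⟫ + m / 2 * ‖x - z‖ ^ 2 ≤ _
  linarith

end InnerProduct

theorem minimal_strongly_convex_extension_general {n : ℕ}
    (U : Set (EuclideanSpace ℝ (Fin n))) (hUopen : IsOpen U)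
    (η : ℝ) (hη : 0 < η) (u : EuclideanSpace ℝ (Fin n) → ℝ)
    (hu : ConvexOn ℝ U (fun x => u x - η / 2 * ‖x‖ ^ 2))
    (K : Set (EuclideanSpace ℝ (Fin n))) (hK : IsCompact K) (hKU : K ⊆ U)
    (hKne : K.Nonempty) :
    ∃ v : EuclideanSpace ℝ (Fin n) → ℝ,
      (∀ x, IsLUB {t : ℝ | ∃ z ∈ K, ∃ ξ ∈ subdiff U u z,
        t = u z + ⟪ξ, x - z⟫ + η / 2 * ‖x - z‖ ^ 2} (v x)) ∧
      ConvexOn ℝ Set.univ (fun x => v x - η / 2 * ‖x‖ ^ 2) ∧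
      (∀ x ∈ K, v x = u x) ∧
      (∀ x ∈ U, v x ≤ u x) := by
  have hsc : StrongConvexOn U η u := strongConvexOn_iff_convex.2 hu
  have hconv : ConvexOn ℝ U u := hsc.convexOn fun r => by positivity
  have hcont : ContinuousOn u U := hconv.continuousOn hUopen
  set P := {p : EuclideanSpace ℝ (Fin n) × EuclideanSpace ℝ (Fin n) |
    p.1 ∈ K ∧ p.2 ∈ subdiff U u p.1}
  set S := fun x => (fun p => tangentParaboloid η u p.1 p.2 x) '' P
  obtain ⟨R, hR⟩ := hK.exists_bound_of_forall_add_inner_le hUopen hKU hcont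
  have hP : Bornology.IsBounded P :=
    (hK.isBounded.prod (isBounded_closedBall (x := 0) (r := R))).subset
      fun p hp => ⟨hp.1, mem_closedBall_zero_iff.2 (hR _ hp.1 _ hp.2)⟩
  have hPu : BddAbove ((fun p => u p.1) '' P) :=
    (hK.bddAbove_image (hcont.mono hKU)).mono <| by
      rintro _ ⟨p, hp, rfl⟩
      exact mem_image_of_mem u hp.1
  obtain ⟨z₀, hz₀⟩ := hKne
  obtain ⟨ξ₀, hξ₀⟩ := hconv.exists_forall_add_inner_le hUopen (hKU hz₀)
  have hlub x : IsLUB (S x) (sSup (S x)) :=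
    isLUB_csSup (Nonempty.image _ ⟨(z₀, ξ₀), hz₀, hξ₀⟩)
      (bddAbove_tangentParaboloid_image hP hPu x)
  have hle x (hx : x ∈ U) : sSup (S x) ≤ u x := (hlub x).2 <| by
    rintro _ ⟨p, ⟨hz, hξ⟩, rfl⟩
    exact hsc.tangentParaboloid_le (hKU hz) hξ hx
  refine ⟨fun x => sSup (S x), fun x => ?_, ?_, fun x hx => (hle x (hKU hx)).antisymm ?_, hle⟩
  · convert hlub x using 1
    ext t
    constructor
    · rintro ⟨z, hz, ξ, hξ, rfl⟩
      exact ⟨(z, ξ), ⟨hz, hξ⟩, rfl⟩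
    · rintro ⟨⟨z, ξ⟩, ⟨hz, hξ⟩, rfl⟩
      exact ⟨z, hz, ξ, hξ, rfl⟩
  · exact strongConvexOn_iff_convex.1 <| uniformConvexOn_of_isLUB convex_univ
      (fun _ _ => strongConvexOn_tangentParaboloid) fun x _ => hlub x
  · obtain ⟨ξ, hξ⟩ := hconv.exists_forall_add_inner_le hUopen (hKU hx)
    exact (hlub x).1 ⟨(x, ξ), ⟨hx, hξ⟩, tangentParaboloid_self⟩

/-- Minimal `η`-strongly convex extension from a compact set: the supremum
`ũ(x) = sup {u(z) + ⟨ξ_z, x - z⟩ + (η/2)|x - z|² : z ∈ K, ξ_z ∈ ∂u(z)}` is finite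
everywhere (there is a real-valued function `ũ` which is the least upper bound at each
point), `η`-strongly convex on `ℝⁿ`, agrees with `u` on `K`, and is `≤ u` on `U`. -/
theorem minimal_strongly_convex_extension {n : ℕ}
    (U : Set (EuclideanSpace ℝ (Fin n))) (hUopen : IsOpen U) (hUconv : Convex ℝ U)
    (η : ℝ) (hη : 0 < η) (u : EuclideanSpace ℝ (Fin n) → ℝ)
    (hu : ConvexOn ℝ U (fun x => u x - η / 2 * ‖x‖ ^ 2))
    (K : Set (EuclideanSpace ℝ (Fin n))) (hK : IsCompact K) (hKU : K ⊆ U)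
    (hKne : K.Nonempty) :
    ∃ v : EuclideanSpace ℝ (Fin n) → ℝ,
      (∀ x, IsLUB {t : ℝ | ∃ z ∈ K, ∃ ξ ∈ subdiff U u z,
        t = u z + ⟪ξ, x - z⟫ + η / 2 * ‖x - z‖ ^ 2} (v x)) ∧
      ConvexOn ℝ Set.univ (fun x => v x - η / 2 * ‖x‖ ^ 2) ∧
      (∀ x ∈ K, v x = u x) ∧
      (∀ x ∈ U, v x ≤ u x) :=
  minimal_strongly_convex_extension_general U hUopen η hη u hu K hK hKU hKne
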